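/- arXiv:1210.2614 — 6 statements merged into one kernel-verified Lean document; each statement's English description precedes it below -/
import Mathlib

section
/- Let m_1, m_2 be positive coprime integers, and let m_1^{-1} be the integer with 1 ≤ m_1^{-1} < m_2 and m_1·m_1^{-1} ≡ 1 (mod m_2), and let m_2^{-1} be the integer with 1 ≤ m_2^{-1} < m_1 and m_2·m_2^{-1} ≡ 1 (mod m_1). Then for every integer k ≥ 0, the number of pairs (x_1,x_2) of nonnegative integers with m_2·x_1 + m_1·x_2 = k equals k/(m_1·m_2) − {m_2^{-1}·k / m_1} − {m_1^{-1}·k / m_2} + 1, where {x} denotes the fractional part of x. -/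
/-!
With `r₁ = b k mod m₁` and `r₂ = a k mod m₂`, the inverses give `m₂ r₁ + m₁ r₂ ≡ k` modulo `m₁`
and modulo `m₂`, hence `k = m₂ r₁ + m₁ r₂ + m₁ m₂ N` for an integer `N ≥ -1`. The nonnegative
solutions of `m₂ x + m₁ y = k` are then exactly `(r₁ + m₁ t, r₂ + m₂ (N - t))` for `0 ≤ t ≤ N`,
so there are `N + 1 = k / (m₁ m₂) - r₁ / m₁ - r₂ / m₂ + 1` of them.
-/

namespace Popoviciu

section Residues

variable {m₁ m₂ a b : ℕ}

lemma mul_mod_add_mul_modEq (hbinv : m₂ * b ≡ 1 [MOD m₁]) (k c : ℕ) :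
    m₂ * (b * k % m₁) + m₁ * c ≡ k [MOD m₁] :=
  calc m₂ * (b * k % m₁) + m₁ * c ≡ m₂ * (b * k % m₁) + 0 [MOD m₁] :=
        Nat.ModEq.add_left _ (Nat.modEq_zero_iff_dvd.mpr (dvd_mul_right _ _))
    _ ≡ m₂ * (b * k) [MOD m₁] := (Nat.mod_modEq _ _).mul_left _
    _ = m₂ * b * k := (mul_assoc _ _ _).symm
    _ ≡ 1 * k [MOD m₁] := hbinv.mul_right k
    _ = k := one_mul k

lemma mul_mod_add_mul_mod_modEq (hco : m₁.Coprime m₂) (hainv : m₁ * a ≡ 1 [MOD m₂])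
    (hbinv : m₂ * b ≡ 1 [MOD m₁]) (k : ℕ) :
    m₂ * (b * k % m₁) + m₁ * (a * k % m₂) ≡ k [MOD m₁ * m₂] :=
  (Nat.modEq_and_modEq_iff_modEq_mul hco).mp
    ⟨mul_mod_add_mul_modEq hbinv k _, add_comm (m₂ * _) _ ▸ mul_mod_add_mul_modEq hainv k _⟩

end Residues

section Solutions

variable {m₁ m₂ r₁ r₂ N : ℤ}

lemma exists_eq_of_mul_add_mul_eq (hco : IsCoprime m₁ m₂) (hm₁ : m₁ ≠ 0) {x y : ℤ}
    (h : m₂ * x + m₁ * y = m₂ * r₁ + m₁ * r₂ + m₁ * m₂ * N) :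
    ∃ t, x = r₁ + m₁ * t ∧ y = r₂ + m₂ * (N - t) := by
  obtain ⟨t, ht⟩ : m₁ ∣ x - r₁ :=
    hco.dvd_of_dvd_mul_left ⟨m₂ * N + r₂ - y, by linear_combination h⟩
  refine ⟨t, by linarith, mul_left_cancel₀ hm₁ ?_⟩
  linear_combination h - m₂ * ht

lemma setOf_nonneg_solutions_eq_image (hco : IsCoprime m₁ m₂) (hm₁ : 0 < m₁) (hm₂ : 0 < m₂)
    (hr₁ : 0 ≤ r₁) (hr₁' : r₁ < m₁) (hr₂ : 0 ≤ r₂) (hr₂' : r₂ < m₂) :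
    {p : ℤ × ℤ | 0 ≤ p.1 ∧ 0 ≤ p.2 ∧ m₂ * p.1 + m₁ * p.2 = m₂ * r₁ + m₁ * r₂ + m₁ * m₂ * N} =
      (fun t ↦ (r₁ + m₁ * t, r₂ + m₂ * (N - t))) '' Set.Icc 0 N := by
  ext ⟨x, y⟩
  simp only [Set.mem_ofPred_eq, Set.mem_image, Set.mem_Icc, Prod.mk.injEq]
  constructor
  · rintro ⟨hx, hy, h⟩
    obtain ⟨t, rfl, rfl⟩ := exists_eq_of_mul_add_mul_eq hco hm₁.ne' h
    have ht : 0 ≤ t := by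
      by_contra! ht
      nlinarith
    have htN : t ≤ N := by
      by_contra! htN
      nlinarith
    exact ⟨t, ⟨ht, htN⟩, rfl, rfl⟩
  · rintro ⟨t, ⟨ht, htN⟩, rfl, rfl⟩
    refine ⟨by positivity, ?_, by ring⟩
    have : 0 ≤ N - t := by linarith
    positivity

lemma ncard_setOf_nonneg_solutions (hco : IsCoprime m₁ m₂) (hm₁ : 0 < m₁) (hm₂ : 0 < m₂)
    (hr₁ : 0 ≤ r₁) (hr₁' : r₁ < m₁) (hr₂ : 0 ≤ r₂) (hr₂' : r₂ < m₂)
    (hk : 0 ≤ m₂ * r₁ + m₁ * r₂ + m₁ * m₂ * N) :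
    ({p : ℤ × ℤ | 0 ≤ p.1 ∧ 0 ≤ p.2 ∧
        m₂ * p.1 + m₁ * p.2 = m₂ * r₁ + m₁ * r₂ + m₁ * m₂ * N}.ncard : ℤ) = N + 1 := by
  have hN : -1 ≤ N := by
    by_contra! hN
    have : m₁ * m₂ * N ≤ m₁ * m₂ * (-2) := by gcongr; omega
    nlinarith
  have hinj : Function.Injective fun t ↦ (r₁ + m₁ * t, r₂ + m₂ * (N - t)) := fun s t hst ↦
    mul_left_cancel₀ hm₁.ne' (add_left_cancel (congrArg Prod.fst hst))
  rw [setOf_nonneg_solutions_eq_image hco hm₁ hm₂ hr₁ hr₁' hr₂ hr₂',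
    Set.ncard_image_of_injective _ hinj, ← Finset.coe_Icc, Set.ncard_coe_finset, Int.card_Icc,
    sub_zero, Int.toNat_of_nonneg (by omega)]

end Solutions

end Popoviciu

theorem stmt1_general (m₁ m₂ a b : ℕ) (hm₁ : 0 < m₁) (hm₂ : 0 < m₂)
    (hco : Nat.Coprime m₁ m₂)
    (hainv : m₁ * a ≡ 1 [MOD m₂])
    (hbinv : m₂ * b ≡ 1 [MOD m₁])
    (k : ℕ) :
    (Set.ncard {p : ℤ × ℤ | 0 ≤ p.1 ∧ 0 ≤ p.2 ∧
        (m₂ : ℤ) * p.1 + (m₁ : ℤ) * p.2 = (k : ℤ)} : ℝ) =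
      (k : ℝ) / ((m₁ : ℝ) * m₂) - Int.fract ((b * k : ℝ) / m₁)
        - Int.fract ((a * k : ℝ) / m₂) + 1 := by
  set r₁ := b * k % m₁
  set r₂ := a * k % m₂
  obtain ⟨N, hN⟩ := Nat.modEq_iff_dvd.mp (Popoviciu.mul_mod_add_mul_mod_modEq hco hainv hbinv k)
  have hk : (k : ℤ) = m₂ * r₁ + m₁ * r₂ + m₁ * m₂ * N := by
    simp only [Nat.cast_add, Nat.cast_mul] at hN
    linarith
  have hcard := Popoviciu.ncard_setOf_nonneg_solutions (Nat.isCoprime_iff_coprime.mpr hco)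
    (Int.natCast_pos.mpr hm₁) (Int.natCast_pos.mpr hm₂) (Int.natCast_nonneg r₁)
    (Int.ofNat_lt.mpr (Nat.mod_lt _ hm₁)) (Int.natCast_nonneg r₂)
    (Int.ofNat_lt.mpr (Nat.mod_lt _ hm₂)) (hk ▸ Int.natCast_nonneg k)
  rw [← hk] at hcard
  have hkR : (k : ℝ) = m₂ * r₁ + m₁ * r₂ + m₁ * m₂ * N := by exact_mod_cast hk
  rw [← Int.cast_natCast, hcard, ← Nat.cast_mul b k, ← Nat.cast_mul a k,
    Int.fract_div_natCast_eq_div_natCast_mod, Int.fract_div_natCast_eq_div_natCast_mod, hkR]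
  field_simp
  push_cast
  ring

/-- Popoviciu's formula for the denumerant in two coprime parts. -/
theorem stmt1 (m₁ m₂ a b : ℕ) (hm₁ : 0 < m₁) (hm₂ : 0 < m₂)
    (hco : Nat.Coprime m₁ m₂)
    (ha : 1 ≤ a) (ha' : a < m₂) (hainv : m₁ * a ≡ 1 [MOD m₂])
    (hb : 1 ≤ b) (hb' : b < m₁) (hbinv : m₂ * b ≡ 1 [MOD m₁])
    (k : ℕ) :
    (Set.ncard {p : ℤ × ℤ | 0 ≤ p.1 ∧ 0 ≤ p.2 ∧
        (m₂ : ℤ) * p.1 + (m₁ : ℤ) * p.2 = (k : ℤ)} : ℝ) =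
      (k : ℝ) / ((m₁ : ℝ) * m₂) - Int.fract ((b * k : ℝ) / m₁)
        - Int.fract ((a * k : ℝ) / m₂) + 1 :=
  stmt1_general m₁ m₂ a b hm₁ hm₂ hco hainv hbinv k
end

section
/- For positive integers n, m and integer k with 0 ≤ k ≤ n·m, the quantity H(k) = Σ_{i=0}^{n} (-1)^i C(n,i) C(n-1+k-i·m, n-1) is nonnegative, where binomial coefficients with negative upper argument are taken to be 0. -/
/-- Integer binomial coefficient, zero for negative upper argument. -/
def ch (a : ℤ) (b : ℕ) : ℤ := if a < 0 then 0 else ((a.toNat).choose b : ℤ)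

/-!
`H(k)` is the coefficient of `X^k` in `(1 + X + ⋯ + X^(m-1))^n`, as one sees by writing this power
as `(1 - X^m)^n · (1 - X)^(-n)` and expanding both factors. A power of a series with nonnegative
coefficients has nonnegative coefficients.
-/

open PowerSeries Finset

namespace PowerSeries

section OrderedSemiring

variable {R : Type*} [CommSemiring R] [PartialOrder R] [IsOrderedRing R]

theorem coeff_pow_nonneg {f : R⟦X⟧} (hf : ∀ j, 0 ≤ coeff j f) (k j : ℕ) :
    0 ≤ coeff j (f ^ k) := by
  rw [coeff_pow]
  exact sum_nonneg fun l _ => prod_nonneg fun i _ => hf (l i)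

theorem coeff_geom_sum_X_nonneg (m j : ℕ) : 0 ≤ coeff j (∑ i ∈ range m, X ^ i : R⟦X⟧) := by
  rw [map_sum]
  refine sum_nonneg fun i _ => ?_
  rw [coeff_X_pow]
  split_ifs
  exacts [zero_le_one, le_rfl]

end OrderedSemiring

section CommRing

variable {R : Type*} [CommRing R]

theorem geom_sum_X_pow_eq_mul_invOneSubPow (n m : ℕ) :
    (∑ j ∈ range m, X ^ j : R⟦X⟧) ^ n = (1 - X ^ m) ^ n * (invOneSubPow R n).val := by
  have hgeom : (∑ j ∈ range m, X ^ j : R⟦X⟧) * (1 - X) = 1 - X ^ m := by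
    rw [← neg_sub, mul_neg, geom_sum_mul, neg_sub]
  rw [← hgeom, mul_pow, mul_assoc, ← invOneSubPow_inv_eq_one_sub_pow, Units.inv_val, mul_one]

theorem one_sub_X_pow_pow_eq_sum (n m : ℕ) :
    (1 - X ^ m : R⟦X⟧) ^ n =
      ∑ i ∈ range (n + 1), C ((-1) ^ i * n.choose i : R) * X ^ (i * m) := by
  rw [sub_eq_neg_add, add_pow]
  refine sum_congr rfl fun i _ => ?_
  rw [map_mul, map_pow, map_neg, map_one, map_natCast, neg_pow, pow_mul', one_pow, mul_one]
  ring

end CommRing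

theorem coeff_X_pow_mul_invOneSubPow {n : ℕ} (hn : 0 < n) (a k : ℕ) :
    coeff k (X ^ a * (invOneSubPow ℤ n).val) = ch ((n : ℤ) - 1 + k - a) (n - 1) := by
  rw [coeff_X_pow_mul', invOneSubPow_val_eq_mk_sub_one_add_choose_of_pos ℤ n hn, coeff_mk, ch]
  split_ifs
  · omega
  · congr 2
    omega
  · rfl
  · rw [Nat.choose_eq_zero_of_lt (by omega), Nat.cast_zero]

end PowerSeries

theorem stmt5_general (n m k : ℕ) (hn : 0 < n) :
    0 ≤ ∑ i ∈ Finset.range (n + 1),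
        (-1 : ℤ) ^ i * (n.choose i : ℤ) * ch ((n : ℤ) - 1 + k - i * m) (n - 1) := by
  have hcoeff : coeff k ((∑ j ∈ range m, X ^ j : ℤ⟦X⟧) ^ n) =
      ∑ i ∈ range (n + 1),
        (-1 : ℤ) ^ i * (n.choose i : ℤ) * ch ((n : ℤ) - 1 + k - i * m) (n - 1) := by
    rw [geom_sum_X_pow_eq_mul_invOneSubPow, one_sub_X_pow_pow_eq_sum, sum_mul, map_sum]
    refine sum_congr rfl fun i _ => ?_
    rw [mul_assoc, coeff_C_mul, coeff_X_pow_mul_invOneSubPow hn, Nat.cast_mul]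
  exact hcoeff ▸ coeff_pow_nonneg (coeff_geom_sum_X_nonneg m) n k

/-- Nonnegativity of the Hodge numbers of the diagonal polynomial `x₁^m + ⋯ + x_n^m`. -/
theorem stmt5 (n m k : ℕ) (hn : 0 < n) (hm : 0 < m) (hk : k ≤ n * m) :
    0 ≤ ∑ i ∈ Finset.range (n + 1),
        (-1 : ℤ) ^ i * (n.choose i : ℤ) * ch ((n : ℤ) - 1 + k - i * m) (n - 1) :=
  stmt5_general n m k hn
end

section
/- For positive integers n, m, j with 0 ≤ j ≤ n and integer k ≥ 0, the number of lattice points (x_1,...,x_n) ∈ Z^n with x_i ≥ 0 for i > j and |x_1| + ... + |x_n| = k equals Σ_{i=0}^{j} 2^{j-i} (-1)^i C(j,i) C(n-i-1+k, n-i-1), where terms with n-i ≤ 0 are interpreted as 0 unless k=0. -/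
/-!
Fibre the lattice points over their vector of absolute values `y`, a composition of `k`.
A point over `y` is a choice of sign on the coordinates in `J` where `y` is nonzero, so the
fibre has `2 ^ #{i ∈ J | y i ≠ 0}` elements. Expanding this power by inclusion–exclusion as
`∑_{T ⊆ J, y = 0 on T} (-1)^#T 2^(#J - #T)` and exchanging the sums leaves, for each `T`, the
compositions of `k` vanishing on `T`, of which there are `multichoose (#ι - #T) k`.
-/

open Finset

lemma Nat.multichoose_eq_ite (m k : ℕ) :
    m.multichoose k = if 0 < m then (m - 1 + k).choose (m - 1) else if k = 0 then 1 else 0 := by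
  rcases m with _ | m
  · cases k <;> simp [Nat.multichoose_zero_right, Nat.multichoose_zero_succ]
  · simp [Nat.multichoose_eq, Nat.choose_symm_add]

namespace Finset

lemma sum_powerset_neg_one_pow_mul_pow {α R : Type*} [CommRing R] {s t : Finset α} (h : s ⊆ t)
    (a : R) : ∑ u ∈ s.powerset, (-1) ^ #u * a ^ (#t - #u) = a ^ (#t - #s) * (a - 1) ^ #s := by
  have hs := card_le_card h
  calc
    _ = ∑ u ∈ s.powerset, a ^ (#t - #s) * ((-1) ^ #u * a ^ (#s - #u)) := by
      refine sum_congr rfl fun u hu => ?_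
      have hu := card_le_card (mem_powerset.1 hu)
      rw [show #t - #u = (#t - #s) + (#s - #u) by omega, pow_add]
      ring
    _ = _ := by rw [← mul_sum, sum_pow_mul_eq_add_pow, neg_add_eq_sub]

lemma card_piAntidiag {ι : Type*} [DecidableEq ι] (s : Finset ι) (n : ℕ) :
    #(piAntidiag s n) = (#s).multichoose n := by
  rw [← card_finsuppAntidiag_nat_eq_multichoose, finsuppAntidiag, card_map, card_attach]

lemma piAntidiag_compl {ι μ : Type*} [Fintype ι] [DecidableEq ι] [AddCommMonoid μ]
    [HasAntidiagonal μ] [DecidableEq μ] (s : Finset ι) (n : μ) :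
    piAntidiag sᶜ n = {f ∈ piAntidiag (univ : Finset ι) n | ∀ i ∈ s, f i = 0} := by
  ext f
  simp only [mem_piAntidiag, mem_filter, mem_univ, implies_true, and_true, mem_compl]
  have sum_compl (hzero : ∀ i ∈ s, f i = 0) : ∑ i ∈ sᶜ, f i = ∑ i, f i := by
    rw [← sum_compl_add_sum s, sum_eq_zero hzero, add_zero]
  constructor
  · rintro ⟨hsum, hsupp⟩
    have hzero : ∀ i ∈ s, f i = 0 := fun i hi => by_contra fun h => hsupp i h hi
    exact ⟨(sum_compl hzero).symm.trans hsum, hzero⟩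
  · rintro ⟨hsum, hzero⟩
    exact ⟨(sum_compl hzero).trans hsum, fun i hi his => hi (hzero i his)⟩

end Finset

section SignedLifts

variable {ι : Type*} [Fintype ι] [DecidableEq ι]

def signedLifts (J : Finset ι) (y : ι → ℕ) : Finset (ι → ℤ) :=
  Fintype.piFinset fun i => if i ∈ J then {(y i : ℤ), -(y i : ℤ)} else {(y i : ℤ)}

lemma mem_signedLifts {J : Finset ι} {y : ι → ℕ} {x : ι → ℤ} :
    x ∈ signedLifts J y ↔ (∀ i ∉ J, 0 ≤ x i) ∧ ∀ i, (x i).natAbs = y i := by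
  simp only [signedLifts, Fintype.mem_piFinset, ← forall_and]
  refine forall_congr' fun i => ?_
  by_cases hi : i ∈ J <;> simp [hi, Int.natAbs_eq_iff]
  omega

lemma card_signedLifts (J : Finset ι) (y : ι → ℕ) :
    #(signedLifts J y) = 2 ^ #{i ∈ J | y i ≠ 0} := by
  have hcard : ∀ i, #(if i ∈ J then {(y i : ℤ), -(y i : ℤ)} else {(y i : ℤ)} : Finset ℤ) =
      if i ∈ J ∧ y i ≠ 0 then 2 else 1 := by
    intro i
    by_cases hi : i ∈ J <;> by_cases hy : y i = 0 <;> simp [hi, hy]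
  rw [signedLifts, Fintype.card_piFinset, prod_congr rfl fun i _ => hcard i, prod_ite,
    prod_const_one, mul_one, prod_const]
  congr 2
  ext i
  simp

lemma pairwiseDisjoint_signedLifts (J : Finset ι) (s : Set (ι → ℕ)) :
    s.PairwiseDisjoint (signedLifts J) := by
  intro y _ y' _ hne
  refine disjoint_left.2 fun x hx hx' => hne (funext fun i => ?_)
  rw [← (mem_signedLifts.1 hx).2 i, (mem_signedLifts.1 hx').2 i]

lemma setOf_sum_abs_eq_biUnion_signedLifts (J : Finset ι) (k : ℕ) :
    {x : ι → ℤ | (∀ i ∉ J, 0 ≤ x i) ∧ ∑ i, |x i| = k} =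
      ↑((piAntidiag univ k).biUnion (signedLifts J)) := by
  ext x
  simp only [Set.mem_ofPred_eq, coe_biUnion, mem_coe, mem_piAntidiag, Set.mem_iUnion,
    mem_signedLifts]
  constructor
  · rintro ⟨hx, hsum⟩
    refine ⟨fun i => (x i).natAbs, ⟨?_, by simp⟩, hx, fun i => rfl⟩
    exact_mod_cast (by simpa [Int.natCast_natAbs] using hsum : ((∑ i, (x i).natAbs : ℕ) : ℤ) = k)
  · rintro ⟨y, ⟨hsum, -⟩, hx, hy⟩
    refine ⟨hx, ?_⟩
    simp_rw [Int.abs_eq_natAbs, hy]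
    exact_mod_cast hsum

lemma ncard_setOf_sum_abs_eq_sum_two_pow (J : Finset ι) (k : ℕ) :
    {x : ι → ℤ | (∀ i ∉ J, 0 ≤ x i) ∧ ∑ i, |x i| = k}.ncard =
      ∑ y ∈ piAntidiag univ k, 2 ^ #{i ∈ J | y i ≠ 0} := by
  rw [setOf_sum_abs_eq_biUnion_signedLifts, Set.ncard_coe_finset,
    card_biUnion (pairwiseDisjoint_signedLifts _ _)]
  exact sum_congr rfl fun y _ => card_signedLifts J y

end SignedLifts

theorem ncard_setOf_sum_abs_eq_sum_choose_mul_multichoose (ι : Type*) [Fintype ι]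
    [DecidableEq ι] (J : Finset ι) (k : ℕ) :
    ({x : ι → ℤ | (∀ i ∉ J, 0 ≤ x i) ∧ ∑ i, |x i| = k}.ncard : ℤ) =
      ∑ i ∈ range (#J + 1),
        2 ^ (#J - i) * (-1 : ℤ) ^ i * ((#J).choose i : ℤ) *
          ((Fintype.card ι - i).multichoose k : ℤ) := by
  calc
    _ = ∑ y ∈ piAntidiag univ k, ∑ T ∈ {i ∈ J | y i = 0}.powerset,
          (-1) ^ #T * (2 : ℤ) ^ (#J - #T) := by
      push_cast [ncard_setOf_sum_abs_eq_sum_two_pow]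
      refine sum_congr rfl fun y _ => ?_
      rw [sum_powerset_neg_one_pow_mul_pow (filter_subset _ _)]
      norm_num
      have := card_filter_add_card_filter_not (s := J) (fun i => y i = 0)
      omega
    _ = ∑ T ∈ J.powerset, ∑ y ∈ piAntidiag Tᶜ k, (-1) ^ #T * (2 : ℤ) ^ (#J - #T) := by
      refine sum_comm' fun y T => ?_
      simp only [piAntidiag_compl, mem_filter, mem_powerset, subset_iff]
      aesop
    _ = ∑ T ∈ J.powerset,
          (-1) ^ #T * (2 : ℤ) ^ (#J - #T) * (Fintype.card ι - #T).multichoose k := by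
      simp [card_piAntidiag, card_compl, mul_comm]
    _ = _ := by
      rw [sum_powerset_apply_card
        (fun i => (-1) ^ i * (2 : ℤ) ^ (#J - i) * (Fintype.card ι - i).multichoose k)]
      simp only [nsmul_eq_mul]
      exact sum_congr rfl fun i _ => by ring

theorem stmt9_general (n j k : ℕ) (hj : j ≤ n) :
    (Set.ncard {x : Fin n → ℤ |
        (∀ i : Fin n, j ≤ (i : ℕ) → 0 ≤ x i) ∧ ∑ i, |x i| = (k : ℤ)} : ℤ) =
      ∑ i ∈ Finset.range (j + 1),
        2 ^ (j - i) * (-1 : ℤ) ^ i * (j.choose i : ℤ) *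
          (if i < n then ((n - i - 1 + k).choose (n - i - 1) : ℤ)
           else if k = 0 then 1 else 0) := by
  set J : Finset (Fin n) := {i | (i : ℕ) < j}
  have hJ : #J = j := by rw [Fin.card_filter_val_lt, min_eq_right hj]
  have hset : {x : Fin n → ℤ | (∀ i : Fin n, j ≤ (i : ℕ) → 0 ≤ x i) ∧ ∑ i, |x i| = (k : ℤ)} =
      {x : Fin n → ℤ | (∀ i ∉ J, 0 ≤ x i) ∧ ∑ i, |x i| = (k : ℤ)} := by
    ext
    simp [J]
  rw [hset, ncard_setOf_sum_abs_eq_sum_choose_mul_multichoose, hJ, Fintype.card_fin]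
  refine sum_congr rfl fun i _ => ?_
  rw [Nat.multichoose_eq_ite]
  split_ifs <;> simp_all

/-- Weight numbers for the reflection variant `G^j_{n,m}`: the number of points
of `ℤ^n` with the last `n-j` coordinates nonnegative and absolute coordinate sum
`k` is given by the alternating binomial sum. -/
theorem stmt9 (n m j k : ℕ) (hn : 0 < n) (hm : 0 < m) (hj : j ≤ n) :
    (Set.ncard {x : Fin n → ℤ |
        (∀ i : Fin n, j ≤ (i : ℕ) → 0 ≤ x i) ∧ ∑ i, |x i| = (k : ℤ)} : ℤ) =
      ∑ i ∈ Finset.range (j + 1),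
        2 ^ (j - i) * (-1 : ℤ) ^ i * (j.choose i : ℤ) *
          (if i < n then ((n - i - 1 + k).choose (n - i - 1) : ℤ)
           else if k = 0 then 1 else 0) :=
  stmt9_general n j k hj
end

section
/- Fix positive integers m and j with 2 ≤ j and s with 2 ≤ s ≤ j ≤ n, and ℓ with 1 ≤ ℓ ≤ n, excluding the case s = j = n. The number of lattice points (x_1,...,x_n) ∈ Z^n such that exactly s of the coordinates x_1,...,x_j equal −ℓ, the remaining coordinates among x_1,...,x_j are ≥ −(ℓ−1), the coordinates x_{j+1},...,x_n are ≥ 0, and the weight equals k/m, is C(j,s)·C(k − mℓ + n − j − 1, n − s − 1). -/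
open Pointwise

/-- The weight of a lattice point with respect to a polytope given as the convex
hull of a vertex set `V`: the least `c ≥ 0` with `x ∈ c·Δ`. -/
noncomputable def polyWeight {n : ℕ} (V : Set (Fin n → ℝ)) (x : Fin n → ℤ) : ℝ :=
  sInf {c : ℝ | 0 ≤ c ∧ (fun i => (x i : ℝ)) ∈ c • convexHull ℝ V}

/-- The vertices of the Kloosterman polytope `Δ(K^j_{n,m})`:
`−(e₁+⋯+e_j)` and `m·e_i` for `1 ≤ i ≤ n`. -/
def klVerts (n j m : ℕ) : Set (Fin n → ℝ) :=
  insert (fun i : Fin n => if (i : ℕ) < j then (-1 : ℝ) else 0)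
    (Set.range fun ℓ : Fin n => fun i => if i = ℓ then (m : ℝ) else 0)

/-!
On the stratum some coordinate `i₀ < j` equals `-ℓ`, the least value allowed there. The linear
functional `p ↦ ∑ pᵢ - (m + j) p_{i₀}` is at most `m` on every vertex of `Δ(K^j_{n,m})`, and
writing `x` as `c` times the convex combination putting weight `ℓ / c` on the vertex
`-(e₁ + ⋯ + e_j)` attains this bound, so the weight of `x` is `(∑ xᵢ + (m + j) ℓ) / m`. The weight
condition therefore only fixes the coordinate sum. Shifting the first `j` coordinates up by
`ℓ - 1`, the points become `f - 1_A` with `A` an `s`-subset of the first `j` indices and `f ≥ 0` a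
vector vanishing on `A` with sum `k - mℓ - j + s`; stars and bars counts these.
-/

open Finset

theorem Finset.card_piAntidiag_nat {ι : Type*} [DecidableEq ι] (s : Finset ι) (n : ℕ) :
    #(piAntidiag s n) = (#s + n - 1).choose n := by
  rw [← card_finsuppAntidiag_nat_eq_choose, finsuppAntidiag, card_map, card_attach]

theorem ch_natCast_add (T r : ℕ) : ch ((T : ℤ) + r) r = (T + r).choose r := by
  rw [ch, if_neg (by omega), ← Nat.cast_add, Int.toNat_natCast]

theorem ch_eq_zero_of_lt {a : ℤ} {r : ℕ} (h : a < r) : ch a r = 0 := by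
  unfold ch
  split_ifs with ha
  · rfl
  · rw [Nat.choose_eq_zero_of_lt (by omega), Nat.cast_zero]

section Weight

variable {n j m : ℕ}

theorem sum_ite_val_lt {R : Type*} [NonAssocSemiring R] (hjn : j ≤ n) (r : R) :
    ∑ i : Fin n, (if (i : ℕ) < j then r else 0) = j * r := by
  rw [← sum_filter, sum_const, Fin.card_filter_val_lt, min_eq_right hjn, nsmul_eq_mul]

theorem mem_convexHull_klVerts_of_sum_eq_one (w₀ : ℝ) (w : Fin n → ℝ) (h₀ : 0 ≤ w₀) (hw : 0 ≤ w)
    (hsum : w₀ + ∑ i, w i = 1) :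
    (fun i : Fin n => (if (i : ℕ) < j then -w₀ else 0) + m * w i) ∈
      convexHull ℝ (klVerts n j m) := by
  let z : Option (Fin n) → Fin n → ℝ := fun o =>
    o.elim (fun i => if (i : ℕ) < j then -1 else 0) fun ι i => if i = ι then (m : ℝ) else 0
  have hz : ∀ o, z o ∈ convexHull ℝ (klVerts n j m) := by
    rintro (_ | ι)
    · exact subset_convexHull ℝ _ (Set.mem_insert _ _)
    · exact subset_convexHull ℝ _ (Set.mem_insert_of_mem _ ⟨ι, rfl⟩)
  convert (convex_convexHull ℝ _).sum_mem (t := univ) (w := fun o => o.elim w₀ w) (z := z)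
    (by rintro (_ | ι) _; exacts [h₀, hw ι]) (by simpa [Fintype.sum_option]) fun o _ => hz o
    using 1
  funext i
  simp [z, Fintype.sum_option, Finset.sum_apply, mul_comm]

theorem convexHull_klVerts_subset (hjn : j ≤ n) {i₀ : Fin n} (hi₀ : (i₀ : ℕ) < j) :
    convexHull ℝ (klVerts n j m) ⊆ {p | ∑ i, p i - (m + j) * p i₀ ≤ m} := by
  refine convexHull_min ?_ (convex_halfSpace_le ⟨fun p q => ?_, fun c p => ?_⟩ _)
  · rintro _ (rfl | ⟨ι, rfl⟩)
    · simp [sum_ite_val_lt hjn, hi₀]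
    · simp only [Set.mem_ofPred_eq, sum_ite_eq', mem_univ, if_true]
      split_ifs <;> nlinarith
  · simp only [Pi.add_apply, sum_add_distrib]
    ring
  · simp only [Pi.smul_apply, smul_eq_mul, ← mul_sum]
    ring

theorem mem_smul_convexHull_klVerts (hm : 0 < m) {a : ℝ} (ha : 0 < a) {b : Fin n → ℝ}
    (hb : 0 ≤ b) :
    (fun i : Fin n => (if (i : ℕ) < j then -a else 0) + b i) ∈
      (a + (∑ i, b i) / m) • convexHull ℝ (klVerts n j m) := by
  have hm' : (0 : ℝ) < m := by exact_mod_cast hm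
  have hc : 0 < a + (∑ i, b i) / m :=
    add_pos_of_pos_of_nonneg ha (div_nonneg (sum_nonneg fun i _ => hb i) hm'.le)
  set c := a + (∑ i, b i) / m with hc_def
  refine ⟨_, mem_convexHull_klVerts_of_sum_eq_one (a / c) (fun i => b i / (c * m))
    (div_pos ha hc).le (fun i => div_nonneg (hb i) (by positivity)) ?_, ?_⟩
  · have hcm : c * m = a * m + ∑ i, b i := by rw [hc_def]; field_simp
    rw [← sum_div]
    field_simp
    linarith
  · funext i
    simp only [Pi.smul_apply, smul_eq_mul]
    split_ifs
    · field_simp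
    · field_simp
      ring

theorem isLeast_smul_convexHull_klVerts (hm : 0 < m) (hjn : j ≤ n) {y : Fin n → ℝ} {L : ℝ}
    (hL : 0 < L) (hlow : ∀ i : Fin n, (i : ℕ) < j → -L ≤ y i)
    (hhigh : ∀ i : Fin n, j ≤ (i : ℕ) → 0 ≤ y i)
    {i₀ : Fin n} (hi₀ : (i₀ : ℕ) < j) (hy₀ : y i₀ = -L) :
    IsLeast {c | 0 ≤ c ∧ y ∈ c • convexHull ℝ (klVerts n j m)}
      ((∑ i, y i + (m + j) * L) / m) := by
  have hm' : (0 : ℝ) < m := by exact_mod_cast hm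
  set b : Fin n → ℝ := fun i => y i + if (i : ℕ) < j then L else 0
  have hb : 0 ≤ b := fun i => by
    by_cases h : (i : ℕ) < j
    · simpa [b, h, neg_le_iff_add_nonneg] using hlow i h
    · simpa [b, h] using hhigh i (not_lt.1 h)
  constructor
  · have hc : (∑ i, y i + (m + j) * L) / m = L + (∑ i, b i) / m := by
      simp only [b, sum_add_distrib, sum_ite_val_lt hjn]
      field_simp
      ring
    rw [hc]
    refine ⟨add_nonneg hL.le (div_nonneg (sum_nonneg fun i _ => hb i) hm'.le), ?_⟩
    convert mem_smul_convexHull_klVerts hm hL hb using 1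
    funext i
    simp only [b]
    split_ifs <;> ring
  · rintro c ⟨hc, p, hp, hy⟩
    obtain rfl : c • p = y := hy
    have hpi₀ : ∑ i, p i - (m + j) * p i₀ ≤ m := convexHull_klVerts_subset hjn hi₀ hp
    simp only [Pi.smul_apply, smul_eq_mul] at hy₀ ⊢
    rw [div_le_iff₀ hm', ← neg_neg L, ← hy₀]
    calc ∑ i, c * p i + (m + j) * -(c * p i₀) = c * (∑ i, p i - (m + j) * p i₀) := by
          rw [mul_sub, mul_sum]; ring
      _ ≤ c * m := mul_le_mul_of_nonneg_left hpi₀ hc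

theorem polyWeight_klVerts_eq (hm : 0 < m) (hjn : j ≤ n) {x : Fin n → ℤ} {ℓ : ℤ} (hℓ : 0 < ℓ)
    (hlow : ∀ i : Fin n, (i : ℕ) < j → -ℓ ≤ x i) (hhigh : ∀ i : Fin n, j ≤ (i : ℕ) → 0 ≤ x i)
    {i₀ : Fin n} (hi₀ : (i₀ : ℕ) < j) (hx₀ : x i₀ = -ℓ) :
    polyWeight (klVerts n j m) x = ((∑ i, x i + (m + j) * ℓ : ℤ) : ℝ) / m := by
  push_cast
  exact (isLeast_smul_convexHull_klVerts hm hjn (by exact_mod_cast hℓ)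
    (fun i hi => by exact_mod_cast hlow i hi) (fun i hi => by exact_mod_cast hhigh i hi) hi₀
    (by exact_mod_cast hx₀)).csInf_eq

end Weight

section Stratum

variable {ι : Type*} [Fintype ι] [DecidableEq ι]

def stratum (J : Finset ι) (s : ℕ) (ℓ σ : ℤ) : Set (ι → ℤ) :=
  {x | #{i ∈ J | x i = -ℓ} = s ∧ (∀ i ∈ J, -ℓ ≤ x i) ∧ (∀ i ∉ J, 0 ≤ x i) ∧ ∑ i, x i = σ}

theorem ncard_stratum_eq_ncard_stratum_one (J : Finset ι) (s : ℕ) (ℓ σ : ℤ) :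
    (stratum J s ℓ σ).ncard = (stratum J s 1 (σ + #J * (ℓ - 1))).ncard := by
  let c : ι → ℤ := fun i => if i ∈ J then ℓ - 1 else 0
  have hshift : stratum J s ℓ σ = (· + c) ⁻¹' stratum J s 1 (σ + #J * (ℓ - 1)) := by
    ext x
    have hsum : ∑ i, (x + c) i = ∑ i, x i + #J * (ℓ - 1) := by
      simp only [Pi.add_apply, c, sum_add_distrib, sum_ite_mem, univ_inter, sum_const,
        nsmul_eq_mul]
    have hfilter : {i ∈ J | (x + c) i = -1} = {i ∈ J | x i = -ℓ} :=
      filter_congr fun i hi => by simp only [Pi.add_apply, c, if_pos hi]; omega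
    simp only [stratum, Set.mem_preimage, Set.mem_ofPred_eq, hsum, hfilter, add_left_inj]
    refine and_congr_right fun _ => and_congr (forall₂_congr fun i hi => ?_)
      (and_congr_left fun _ => forall₂_congr fun i hi => ?_)
    · simp only [Pi.add_apply, c, if_pos hi]; omega
    · simp only [Pi.add_apply, c, if_neg hi, add_zero]
  rw [hshift, Set.ncard_preimage_of_injective_subset_range (add_left_injective c)
    fun y _ => ⟨y - c, sub_add_cancel y c⟩]

def subIndicator (A : Finset ι) (f : ι → ℕ) : ι → ℤ := fun i => f i - if i ∈ A then 1 else 0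

variable {J A : Finset ι} {s T : ℕ} {f : ι → ℕ}

theorem eq_zero_of_mem_piAntidiag_compl (hf : f ∈ piAntidiag Aᶜ T) {i : ι} (hi : i ∈ A) :
    f i = 0 := by
  by_contra h
  exact mem_compl.1 ((mem_piAntidiag.1 hf).2 i h) hi

theorem sum_eq_of_mem_piAntidiag (hf : f ∈ piAntidiag A T) : ∑ i, f i = T := by
  rw [← (mem_piAntidiag.1 hf).1]
  exact (sum_subset (subset_univ A) fun i _ hi => by
    by_contra h; exact hi ((mem_piAntidiag.1 hf).2 i h)).symm

theorem filter_subIndicator_eq (hAJ : A ⊆ J) (hf : f ∈ piAntidiag Aᶜ T) :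
    {i ∈ J | subIndicator A f i = -1} = A := by
  ext i
  rw [mem_filter]
  by_cases hi : i ∈ A
  · simp [subIndicator, hi, hAJ hi, eq_zero_of_mem_piAntidiag_compl hf hi]
  · simp only [subIndicator, hi, if_false, sub_zero, iff_false, not_and]
    omega

theorem subIndicator_mem_stratum_one (hA : A ∈ J.powersetCard s) (hf : f ∈ piAntidiag Aᶜ T) :
    subIndicator A f ∈ stratum J s 1 (T - s) := by
  obtain ⟨hAJ, hAs⟩ := mem_powersetCard.1 hA
  refine ⟨by rw [filter_subIndicator_eq hAJ hf, hAs], fun i _ => ?_, fun i hi => ?_, ?_⟩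
  · simp only [subIndicator]
    split_ifs <;> omega
  · have hiA : i ∉ A := fun h => hi (hAJ h)
    simp [subIndicator, hiA]
  · simp only [subIndicator, sum_sub_distrib, sum_ite_mem, univ_inter, sum_const, hAs]
    rw [← Nat.cast_sum, sum_eq_of_mem_piAntidiag hf]
    simp

variable {x : ι → ℤ} {σ : ℤ}

theorem add_indicator_nonneg_of_mem_stratum_one (hx : x ∈ stratum J s 1 σ) (i : ι) :
    0 ≤ x i + if i ∈ {i ∈ J | x i = -1} then 1 else 0 := by
  obtain ⟨-, hlow, hhigh, -⟩ := hx
  by_cases hi : i ∈ J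
  · have := hlow i hi
    simp only [mem_filter, hi, true_and]
    split_ifs <;> omega
  · simp [hi, hhigh i hi]

theorem sum_add_indicator_of_mem_stratum_one (hx : x ∈ stratum J s 1 σ) :
    ∑ i, (x i + if i ∈ {i ∈ J | x i = -1} then 1 else 0) = σ + s := by
  obtain ⟨hcard, -, -, hsum⟩ := hx
  rw [sum_add_distrib, sum_ite_mem, univ_inter, sum_const, hsum, hcard, nsmul_one]

theorem stratum_one_eq_empty (hσ : σ + s < 0) : stratum J s 1 σ = ∅ :=
  Set.eq_empty_of_forall_notMem fun _ hx => hσ.not_ge <|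
    sum_add_indicator_of_mem_stratum_one hx ▸
      sum_nonneg fun i _ => add_indicator_nonneg_of_mem_stratum_one hx i

theorem stratum_one_eq_image (J : Finset ι) (s T : ℕ) :
    stratum J s 1 (T - s) = (fun p : Σ _ : Finset ι, ι → ℕ => subIndicator p.1 p.2) ''
      ↑((J.powersetCard s).sigma fun A => piAntidiag Aᶜ T) := by
  ext x
  refine ⟨fun hx => ?_, ?_⟩
  · have hnonneg := add_indicator_nonneg_of_mem_stratum_one hx
    have hsum := sum_add_indicator_of_mem_stratum_one hx
    set A := {i ∈ J | x i = -1}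
    have hzero : ∀ i ∈ A, (x i + if i ∈ A then 1 else 0).toNat = 0 := fun i hi => by
      simp [hi, (mem_filter.1 hi).2]
    refine ⟨⟨A, fun i => (x i + if i ∈ A then 1 else 0).toNat⟩, ?_, ?_⟩
    · refine mem_sigma.2 ⟨mem_powersetCard.2 ⟨filter_subset _ _, hx.1⟩,
        mem_piAntidiag.2 ⟨?_, fun i hi => mem_compl.2 fun hiA => hi (hzero i hiA)⟩⟩
      rw [sum_subset (subset_univ _) fun i _ hi => hzero i (by simpa using hi)]
      zify
      rw [sum_congr rfl fun i _ => Int.toNat_of_nonneg (hnonneg i), hsum]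
      ring
    · funext i
      simp only [subIndicator, Int.toNat_of_nonneg (hnonneg i), add_sub_cancel_right]
  · rintro ⟨⟨A, f⟩, hp, rfl⟩
    obtain ⟨hA, hf⟩ := mem_sigma.1 hp
    exact subIndicator_mem_stratum_one hA hf

theorem injOn_subIndicator (J : Finset ι) (s T : ℕ) :
    Set.InjOn (fun p : Σ _ : Finset ι, ι → ℕ => subIndicator p.1 p.2)
      ↑((J.powersetCard s).sigma fun A => piAntidiag Aᶜ T) := by
  rintro ⟨A, f⟩ hp ⟨A', f'⟩ hp' h
  obtain ⟨hA, hf⟩ := mem_sigma.1 hp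
  obtain ⟨hA', hf'⟩ := mem_sigma.1 hp'
  dsimp only at h hA hf hA' hf'
  obtain rfl : A = A' := by
    rw [← filter_subIndicator_eq (mem_powersetCard.1 hA).1 hf,
      ← filter_subIndicator_eq (mem_powersetCard.1 hA').1 hf', h]
  obtain rfl : f = f' := funext fun i => by
    simpa [subIndicator] using congrFun h i
  rfl

theorem ncard_stratum_one (J : Finset ι) (s T : ℕ) :
    (stratum J s 1 (T - s)).ncard = (#J).choose s * (Fintype.card ι - s + T - 1).choose T := by
  rw [stratum_one_eq_image, (injOn_subIndicator J s T).ncard_image,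
    Set.ncard_coe_finset, card_sigma, sum_const_nat fun A hA => ?_, card_powersetCard]
  rw [card_piAntidiag_nat, card_compl, (mem_powersetCard.1 hA).2]

theorem ncard_stratum_one_eq_ch (J : Finset ι) (hs : s < Fintype.card ι) (σ : ℤ) :
    ((stratum J s 1 σ).ncard : ℤ) =
      (#J).choose s * ch (σ + s + (Fintype.card ι - s - 1 : ℕ)) (Fintype.card ι - s - 1) := by
  rcases lt_or_ge (σ + s) 0 with hneg | hnonneg
  · rw [stratum_one_eq_empty hneg, Set.ncard_empty, ch_eq_zero_of_lt (by omega), mul_zero,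
      Nat.cast_zero]
  · obtain ⟨T, hT⟩ := Int.eq_ofNat_of_zero_le hnonneg
    rw [show σ = T - s by omega, ncard_stratum_one, sub_add_cancel, ch_natCast_add,
      show Fintype.card ι - s + T - 1 = T + (Fintype.card ι - s - 1) by omega,
      Nat.choose_symm_add, Nat.cast_mul]

end Stratum

theorem stmt14_general (n m j s ℓ k : ℕ) (hm : 0 < m) (hs2 : 2 ≤ s) (hsj : s ≤ j)
    (hjn : j ≤ n) (hℓ1 : 1 ≤ ℓ) (hexc : ¬(s = j ∧ j = n)) :
    (Set.ncard {x : Fin n → ℤ |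
        (Finset.univ.filter fun i : Fin n => (i : ℕ) < j ∧ x i = -(ℓ : ℤ)).card = s ∧
        (∀ i : Fin n, (i : ℕ) < j → (x i = -(ℓ : ℤ) ∨ -((ℓ : ℤ) - 1) ≤ x i)) ∧
        (∀ i : Fin n, j ≤ (i : ℕ) → 0 ≤ x i) ∧
        polyWeight (klVerts n j m) x = (k : ℝ) / m} : ℤ) =
      (j.choose s : ℤ) * ch ((k : ℤ) - m * ℓ + n - j - 1) (n - s - 1) := by
  set J : Finset (Fin n) := {i | (i : ℕ) < j}
  have hJ : #J = j := by rw [Fin.card_filter_val_lt, min_eq_right hjn]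
  have hsn : s < Fintype.card (Fin n) := by rw [Fintype.card_fin]; omega
  trans ((stratum J s ℓ (k - (m + j) * ℓ)).ncard : ℤ)
  · congr 2
    ext x
    simp only [stratum, J, Set.mem_ofPred_eq, filter_filter, mem_filter, mem_univ, true_and,
      not_lt]
    refine and_congr_right fun hcard => ?_
    rw [forall₂_congr fun (i : Fin n) (_ : (i : ℕ) < j) =>
      (by omega : x i = -(ℓ : ℤ) ∨ -((ℓ : ℤ) - 1) ≤ x i ↔ -(ℓ : ℤ) ≤ x i)]
    refine and_congr_right fun hlow => and_congr_right fun hhigh => ?_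
    obtain ⟨i₀, hi₀⟩ : ({i | (i : ℕ) < j ∧ x i = -(ℓ : ℤ)} : Finset (Fin n)).Nonempty :=
      card_pos.1 (by omega)
    rw [mem_filter] at hi₀
    rw [polyWeight_klVerts_eq hm hjn (by omega) hlow hhigh hi₀.2.1 hi₀.2.2,
      div_left_inj' (by positivity), ← Int.cast_natCast (R := ℝ) k, Int.cast_inj]
    omega
  · rw [ncard_stratum_eq_ncard_stratum_one, ncard_stratum_one_eq_ch J hsn, hJ, Fintype.card_fin]
    congr 2
    push_cast [Nat.sub_sub, Nat.cast_sub (show s + 1 ≤ n by omega)]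
    ring

/-- Counting lattice points of weight `k/m` in a stratum of the cone of the
Kloosterman polytope: exactly `s` of the first `j` coordinates equal `−ℓ`, the
remaining first `j` coordinates are `≥ −(ℓ−1)`, and the rest are `≥ 0`. -/
theorem stmt14 (n m j s ℓ k : ℕ) (hm : 0 < m) (hs2 : 2 ≤ s) (hsj : s ≤ j)
    (hjn : j ≤ n) (hℓ1 : 1 ≤ ℓ) (hℓn : ℓ ≤ n) (hexc : ¬(s = j ∧ j = n)) :
    (Set.ncard {x : Fin n → ℤ |
        (Finset.univ.filter fun i : Fin n => (i : ℕ) < j ∧ x i = -(ℓ : ℤ)).card = s ∧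
        (∀ i : Fin n, (i : ℕ) < j → (x i = -(ℓ : ℤ) ∨ -((ℓ : ℤ) - 1) ≤ x i)) ∧
        (∀ i : Fin n, j ≤ (i : ℕ) → 0 ≤ x i) ∧
        polyWeight (klVerts n j m) x = (k : ℝ) / m} : ℤ) =
      (j.choose s : ℤ) * ch ((k : ℤ) - m * ℓ + n - j - 1) (n - s - 1) :=
  stmt14_general n m j s ℓ k hm hs2 hsj hjn hℓ1 hexc
end

section
/- For a positive integer m and integer k with 0 ≤ k ≤ 2m, the number of lattice points (x_1,x_2) ∈ Z^2 of weight k/m in the cone of the Kloosterman polytope with vertices (m,0), (0,m), (−1,−1) equals (k+1) for 0 ≤ k < m, (m+2) for k = m, (k+3) for m < k < 2m, and (2m+4) for k = 2m. -/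
open Pointwise

private def Mw (m a b : ℤ) : ℤ := max (a + b) (max (a - (m+1)*b) (b - (m+1)*a))

private lemma mem_hull_iff (m : ℕ) (hm : 0 < m) (v : Fin 2 → ℝ) :
    v ∈ convexHull ℝ ({(fun _ => -1), (fun i => if i = 0 then (m : ℝ) else 0),
      (fun i => if i = 1 then (m : ℝ) else 0)} : Set (Fin 2 → ℝ)) ↔
    v 0 + v 1 ≤ m ∧ v 0 - (m+1)*v 1 ≤ m ∧ v 1 - (m+1)*v 0 ≤ m := by
  have hm' : (1:ℝ) ≤ m := by exact_mod_cast hm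
  constructor
  · intro hv
    have hsub : convexHull ℝ ({(fun _ => -1), (fun i => if i = 0 then (m : ℝ) else 0),
        (fun i => if i = 1 then (m : ℝ) else 0)} : Set (Fin 2 → ℝ)) ⊆
        {w : Fin 2 → ℝ | w 0 + w 1 ≤ m ∧ w 0 - (m+1)*w 1 ≤ m ∧ w 1 - (m+1)*w 0 ≤ m} := by
      apply convexHull_min
      · rintro w (rfl | rfl | rfl) <;>
          simp only [Set.mem_setOf_eq] <;>
          refine ⟨?_, ?_, ?_⟩ <;> norm_num <;> nlinarith
      · intro x hx y hy a b ha hb hab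
        simp only [Set.mem_setOf_eq, Pi.add_apply, Pi.smul_apply, smul_eq_mul] at *
        refine ⟨by nlinarith [hx.1, hy.1], by nlinarith [hx.2.1, hy.2.1],
          by nlinarith [hx.2.2, hy.2.2]⟩
    exact hsub hv
  · rintro ⟨h1, h2, h3⟩
    set p1 : Fin 2 → ℝ := (fun _ => -1) with hp1
    set p2 : Fin 2 → ℝ := (fun i => if i = 0 then (m : ℝ) else 0) with hp2
    set p3 : Fin 2 → ℝ := (fun i => if i = 1 then (m : ℝ) else 0) with hp3
    have hmul : (0:ℝ) < m * (m+2) := by nlinarith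
    have hne1 : (m:ℝ) ≠ 0 := by linarith
    have hne2 : (m:ℝ) + 2 ≠ 0 := by linarith
    set l1 : ℝ := (m - v 0 - v 1)/(m+2) with hl1
    set l2 : ℝ := ((m+1)*(v 0) - v 1 + m)/(m*(m+2)) with hl2
    set l3 : ℝ := ((m+1)*(v 1) - v 0 + m)/(m*(m+2)) with hl3
    have key : v = ∑ i : Fin 3, (![l1,l2,l3] i) • (![p1,p2,p3] i) := by
      funext j
      rw [Fin.sum_univ_three]
      fin_cases j <;>
        simp [hp1, hp2, hp3, hl1, hl2, hl3] <;>
        field_simp <;> ring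
    rw [key]
    apply Convex.sum_mem (convex_convexHull ℝ _)
    · intro i _
      fin_cases i
      · simpa [hl1] using div_nonneg (by linarith) (by linarith)
      · simpa [hl2] using div_nonneg (by linarith) (by linarith)
      · simpa [hl3] using div_nonneg (by linarith) (by linarith)
    · rw [Fin.sum_univ_three]
      simp only [Matrix.cons_val_zero, Matrix.cons_val_one, Matrix.head_cons]
      have h : (l1 + l2 + l3) * (↑m * (↑m+2)) = 1 * (↑m * (↑m+2)) := by
        rw [hl1, hl2, hl3]; field_simp; ring
      exact mul_right_cancel₀ hmul.ne' h
    · intro i _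
      apply subset_convexHull
      fin_cases i
      · exact Set.mem_insert _ _
      · exact Set.mem_insert_of_mem _ (Set.mem_insert _ _)
      · exact Set.mem_insert_of_mem _ (Set.mem_insert_of_mem _ rfl)

private lemma Mw_nonneg (m a b : ℤ) (hm : 1 ≤ m) : 0 ≤ Mw m a b := by
  unfold Mw
  rcases le_or_gt 0 (a + b) with h | h
  · exact le_trans h (le_max_left _ _)
  · have hab : a + b ≤ -1 := by omega
    have h2 : a - (m+1)*b ≤ max (a - (m+1)*b) (b - (m+1)*a) := le_max_left _ _
    have h3 : b - (m+1)*a ≤ max (a - (m+1)*b) (b - (m+1)*a) := le_max_right _ _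
    have hsum : (a - (m+1)*b) + (b - (m+1)*a) = -m * (a+b) := by ring
    have : 1 ≤ -m * (a+b) := by nlinarith
    have : 1 ≤ 2 * max (a - (m+1)*b) (b - (m+1)*a) := by omega
    have : 0 ≤ max (a - (m+1)*b) (b - (m+1)*a) := by omega
    exact le_trans this (le_max_right _ _)

private lemma Mw_eq_zero (m a b : ℤ) (hm : 1 ≤ m) (h : Mw m a b ≤ 0) : a = 0 ∧ b = 0 := by
  unfold Mw at h
  have h1 : a + b ≤ 0 := le_trans (le_max_left _ _) h
  have h2 : a - (m+1)*b ≤ 0 := le_trans (le_trans (le_max_left _ _) (le_max_right _ _)) h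
  have h3 : b - (m+1)*a ≤ 0 := le_trans (le_trans (le_max_right _ _) (le_max_right _ _)) h
  have hsum : (a - (m+1)*b) + (b - (m+1)*a) = -m * (a+b) := by ring
  have hab : 0 ≤ a + b := by nlinarith
  have hab' : a + b = 0 := le_antisymm h1 hab
  have hb : b = -a := by omega
  constructor <;> nlinarith

private lemma weight_eq (m : ℕ) (hm : 0 < m) (x : Fin 2 → ℤ) :
    polyWeight ({(fun _ => -1), (fun i => if i = 0 then (m : ℝ) else 0),
      (fun i => if i = 1 then (m : ℝ) else 0)} : Set (Fin 2 → ℝ)) x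
      = (Mw m (x 0) (x 1) : ℝ) / m := by
  have hm' : (0:ℝ) < m := by exact_mod_cast hm
  have hm1 : (1:ℤ) ≤ m := by exact_mod_cast hm
  have hMn : (0:ℝ) ≤ (Mw m (x 0) (x 1) : ℝ) := by
    exact_mod_cast Mw_nonneg m (x 0) (x 1) hm1
  have hset : {c : ℝ | 0 ≤ c ∧ (fun i => ((x i : ℝ))) ∈ c • convexHull ℝ
      ({(fun _ => -1), (fun i => if i = 0 then (m : ℝ) else 0),
        (fun i => if i = 1 then (m : ℝ) else 0)} : Set (Fin 2 → ℝ))}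
      = Set.Ici ((Mw m (x 0) (x 1) : ℝ) / m) := by
    ext c
    simp only [Set.mem_setOf_eq, Set.mem_Ici]
    constructor
    · rintro ⟨hc0, hc⟩
      rcases eq_or_lt_of_le hc0 with rfl | hcpos
      · rw [Set.zero_smul_set ⟨_, subset_convexHull ℝ _ (Set.mem_insert _ _)⟩] at hc
        have hx0 : ((x 0 : ℝ)) = 0 ∧ ((x 1 : ℝ)) = 0 := by
          constructor
          · exact congrFun hc 0
          · exact congrFun hc 1
        have h0 : x 0 = 0 := by exact_mod_cast hx0.1
        have h1 : x 1 = 0 := by exact_mod_cast hx0.2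
        have : Mw m (x 0) (x 1) = 0 := by simp [Mw, h0, h1]
        rw [this]
        simp
      · rw [Set.mem_smul_set_iff_inv_smul_mem₀ (ne_of_gt hcpos),
          mem_hull_iff m hm] at hc
        simp only [Pi.smul_apply, smul_eq_mul] at hc
        rw [div_le_iff₀ hm']
        have key : (Mw m (x 0) (x 1) : ℝ) ≤ c * m := by
          have h1 := hc.1
          have h2 := hc.2.1
          have h3 := hc.2.2
          have e1 : ((x 0 : ℝ)) + (x 1 : ℝ) ≤ c * m := by
            rw [inv_mul_eq_div, inv_mul_eq_div, ← add_div, div_le_iff₀ hcpos] at h1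
            linarith [h1]
          have e2 : ((x 0 : ℝ)) - (m+1) * (x 1 : ℝ) ≤ c * m := by
            have : c⁻¹ * ((x 0 : ℝ) - (m+1) * (x 1:ℝ)) ≤ m := by
              rw [mul_sub]; convert h2 using 2; ring
            rw [inv_mul_eq_div, div_le_iff₀ hcpos] at this
            linarith
          have e3 : ((x 1 : ℝ)) - (m+1) * (x 0 : ℝ) ≤ c * m := by
            have : c⁻¹ * ((x 1 : ℝ) - (m+1) * (x 0:ℝ)) ≤ m := by
              rw [mul_sub]; convert h3 using 2; ring
            rw [inv_mul_eq_div, div_le_iff₀ hcpos] at this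
            linarith
          unfold Mw
          push_cast
          rw [max_le_iff, max_le_iff]
          exact ⟨e1, e2, e3⟩
        linarith
    · intro hc
      have hc0 : 0 ≤ c := le_trans (div_nonneg hMn hm'.le) hc
      refine ⟨hc0, ?_⟩
      rcases eq_or_lt_of_le hc0 with rfl | hcpos
      · have : (Mw m (x 0) (x 1) : ℝ) / m ≤ 0 := hc
        have hM0 : Mw m (x 0) (x 1) ≤ 0 := by
          by_contra h
          push_neg at h
          have : (0:ℝ) < (Mw m (x 0) (x 1) : ℝ) := by exact_mod_cast h
          nlinarith [div_pos this hm']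
        obtain ⟨h0, h1⟩ := Mw_eq_zero m (x 0) (x 1) hm1 hM0
        rw [Set.zero_smul_set ⟨_, subset_convexHull ℝ _ (Set.mem_insert _ _)⟩]
        funext i
        fin_cases i <;> simp [h0, h1]
      · rw [Set.mem_smul_set_iff_inv_smul_mem₀ (ne_of_gt hcpos),
          mem_hull_iff m hm]
        simp only [Pi.smul_apply, smul_eq_mul]
        rw [div_le_iff₀ hm'] at hc
        have hM : (Mw m (x 0) (x 1) : ℝ) ≤ c * m := hc
        have h1 : ((x 0 : ℝ)) + (x 1 : ℝ) ≤ c * m := by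
          have : ((x 0 + x 1 : ℤ) : ℝ) ≤ (Mw m (x 0) (x 1) : ℝ) := by
            exact_mod_cast le_max_left _ _
          push_cast at this; linarith
        have h2 : ((x 0 : ℝ)) - (m+1) * (x 1 : ℝ) ≤ c * m := by
          have : ((x 0 - (m+1) * x 1 : ℤ) : ℝ) ≤ (Mw m (x 0) (x 1) : ℝ) := by
            exact_mod_cast le_trans (le_max_left _ _) (le_max_right _ _)
          push_cast at this; linarith
        have h3 : ((x 1 : ℝ)) - (m+1) * (x 0 : ℝ) ≤ c * m := by
          have : ((x 1 - (m+1) * x 0 : ℤ) : ℝ) ≤ (Mw m (x 0) (x 1) : ℝ) := by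
            exact_mod_cast le_trans (le_max_right _ _) (le_max_right _ _)
          push_cast at this; linarith
        refine ⟨?_, ?_, ?_⟩
        · rw [inv_mul_eq_div, inv_mul_eq_div, ← add_div, div_le_iff₀ hcpos]
          linarith
        · have : c⁻¹ * ((x 0 : ℝ) - (m+1) * (x 1:ℝ)) ≤ m := by
            rw [inv_mul_eq_div, div_le_iff₀ hcpos]; linarith
          rw [mul_sub] at this; convert this using 2; ring
        · have : c⁻¹ * ((x 1 : ℝ) - (m+1) * (x 0:ℝ)) ≤ m := by
            rw [inv_mul_eq_div, div_le_iff₀ hcpos]; linarith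
          rw [mul_sub] at this; convert this using 2; ring
  unfold polyWeight
  rw [hset, csInf_Ici]

private lemma char_lemma (m k a b : ℤ) (hm : 1 ≤ m) (hk0 : 0 ≤ k) (hk2 : k ≤ 2*m) :
    Mw m a b = k ↔
      ((0 ≤ a ∧ 0 ≤ b ∧ a + b = k) ∨
       (k = m ∧ a = -1 ∧ b = -1) ∨
       (m < k ∧ k < 2*m ∧ ((a = k - m - 1 ∧ b = -1) ∨ (a = -1 ∧ b = k - m - 1))) ∨
       (k = 2*m ∧ ((a = m - 1 ∧ b = -1) ∨ (a = -1 ∧ b = m - 1) ∨ (a = -2 ∧ b = -2)))) := by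
  unfold Mw
  constructor
  · intro h
    have h1 : a + b ≤ k := h ▸ le_max_left _ _
    have h2 : a - (m+1)*b ≤ k := h ▸ le_trans (le_max_left _ _) (le_max_right _ _)
    have h3 : b - (m+1)*a ≤ k := h ▸ le_trans (le_max_right _ _) (le_max_right _ _)
    have hcases : a + b = k ∨ a - (m+1)*b = k ∨ b - (m+1)*a = k := by
      rcases max_choice (a+b) (max (a - (m+1)*b) (b - (m+1)*a)) with h' | h'
      · left; omega
      · rcases max_choice (a - (m+1)*b) (b - (m+1)*a) with h'' | h'' <;> omega
    rcases hcases with hf | hf | hf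
    · have hb : 0 ≤ b := by nlinarith
      have ha : 0 ≤ a := by nlinarith
      exact Or.inl ⟨ha, hb, hf⟩
    · have hb0 : b ≤ 0 := by nlinarith
      have hba : b ≤ a := by nlinarith
      have ha : a = k + (m+1)*b := by omega
      have hkb : 0 ≤ k + m*b := by nlinarith
      have hbge : -2 ≤ b := by nlinarith
      interval_cases b
      · have hk : k = 2*m := by omega
        refine Or.inr (Or.inr (Or.inr ⟨hk, Or.inr (Or.inr ⟨by omega, rfl⟩)⟩))
      · have hkm : m ≤ k := by omega
        rcases eq_or_lt_of_le hkm with rfl | hlt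
        · exact Or.inr (Or.inl ⟨rfl, by omega, rfl⟩)
        · rcases eq_or_lt_of_le hk2 with hk | hk
          · exact Or.inr (Or.inr (Or.inr ⟨hk, Or.inl ⟨by omega, rfl⟩⟩))
          · exact Or.inr (Or.inr (Or.inl ⟨hlt, hk, Or.inl ⟨by omega, rfl⟩⟩))
      · exact Or.inl ⟨by omega, le_refl 0, by omega⟩
    · have ha0 : a ≤ 0 := by nlinarith
      have hab : a ≤ b := by nlinarith
      have hbv : b = k + (m+1)*a := by omega
      have hka : 0 ≤ k + m*a := by nlinarith
      have hage : -2 ≤ a := by nlinarith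
      interval_cases a
      · have hk : k = 2*m := by omega
        refine Or.inr (Or.inr (Or.inr ⟨hk, Or.inr (Or.inr ⟨rfl, by omega⟩)⟩))
      · have hkm : m ≤ k := by omega
        rcases eq_or_lt_of_le hkm with rfl | hlt
        · exact Or.inr (Or.inl ⟨rfl, rfl, by omega⟩)
        · rcases eq_or_lt_of_le hk2 with hk | hk
          · exact Or.inr (Or.inr (Or.inr ⟨hk, Or.inr (Or.inl ⟨rfl, by omega⟩)⟩))
          · exact Or.inr (Or.inr (Or.inl ⟨hlt, hk, Or.inr ⟨rfl, by omega⟩⟩))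
      · exact Or.inl ⟨le_refl 0, by omega, by omega⟩
  · rintro (⟨ha, hb, hab⟩ | ⟨hk, ha, hb⟩ | ⟨hk1, hk2', hor⟩ | ⟨hk, hor⟩)
    · refine le_antisymm (max_le (by omega) (max_le (by nlinarith) (by nlinarith)))
        (hab ▸ le_max_left _ _)
    · subst ha hb hk
      refine le_antisymm (max_le (by omega) (max_le (by nlinarith) (by nlinarith)))
        (le_trans (le_of_eq (by ring)) (le_trans (le_max_left _ _) (le_max_right _ _)))
    · rcases hor with ⟨ha, hb⟩ | ⟨ha, hb⟩
      · subst ha hb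
        refine le_antisymm (max_le (by omega) (max_le (by nlinarith) (by nlinarith)))
          (le_trans (le_of_eq (by ring)) (le_trans (le_max_left _ _) (le_max_right _ _)))
      · subst ha hb
        refine le_antisymm (max_le (by omega) (max_le (by nlinarith) (by nlinarith)))
          (le_trans (le_of_eq (by ring)) (le_trans (le_max_right _ _) (le_max_right _ _)))
    · subst hk
      rcases hor with ⟨ha, hb⟩ | ⟨ha, hb⟩ | ⟨ha, hb⟩ <;> subst ha hb
      · refine le_antisymm (max_le (by omega) (max_le (by nlinarith) (by nlinarith)))
          (le_trans (le_of_eq (by ring)) (le_trans (le_max_left _ _) (le_max_right _ _)))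
      · refine le_antisymm (max_le (by omega) (max_le (by nlinarith) (by nlinarith)))
          (le_trans (le_of_eq (by ring)) (le_trans (le_max_right _ _) (le_max_right _ _)))
      · refine le_antisymm (max_le (by omega) (max_le (by nlinarith) (by nlinarith)))
          (le_trans (le_of_eq (by ring)) (le_trans (le_max_left _ _) (le_max_right _ _)))

private def pt (a b : ℤ) : Fin 2 → ℤ := ![a, b]

private lemma eq_pt_iff (x : Fin 2 → ℤ) (c d : ℤ) : x = pt c d ↔ x 0 = c ∧ x 1 = d := by
  constructor
  · intro h; exact ⟨by rw [h]; rfl, by rw [h]; rfl⟩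
  · rintro ⟨h0, h1⟩; funext i; fin_cases i
    · exact h0
    · exact h1

private noncomputable def Lf (k : ℤ) : Finset (Fin 2 → ℤ) :=
  (Finset.Icc (0:ℤ) k).image (fun a => pt a (k-a))

private lemma mem_Lf (k : ℤ) (x : Fin 2 → ℤ) :
    x ∈ Lf k ↔ 0 ≤ x 0 ∧ 0 ≤ x 1 ∧ x 0 + x 1 = k := by
  unfold Lf
  rw [Finset.mem_image]
  constructor
  · rintro ⟨a, ha, rfl⟩
    rw [Finset.mem_Icc] at ha
    refine ⟨by simpa [pt] using ha.1, ?_, ?_⟩ <;> simp [pt] <;> omega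
  · rintro ⟨h0, h1, h2⟩
    refine ⟨x 0, Finset.mem_Icc.mpr ⟨h0, by omega⟩, ?_⟩
    rw [eq_comm, eq_pt_iff]
    exact ⟨rfl, by omega⟩

private lemma card_Lf (k : ℤ) (hk : 0 ≤ k) : (Lf k).card = k.toNat + 1 := by
  unfold Lf
  rw [Finset.card_image_of_injective _ (fun a a' h => by
    have := congrFun h 0; simpa [pt] using this)]
  rw [Int.card_Icc]
  omega

private lemma pt_apply_0 (a b : ℤ) : pt a b 0 = a := rfl
private lemma pt_apply_1 (a b : ℤ) : pt a b 1 = b := rfl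

set_option maxHeartbeats 1600000 in
/-- Weight numbers for `K^2_{2,m} = x₁^m + x₂^m + (x₁x₂)^{-1}`: the number of
lattice points of weight `k/m` with respect to the triangle with vertices
`(m,0)`, `(0,m)`, `(−1,−1)`. -/
theorem stmt15 (m k : ℕ) (hm : 0 < m) (hk : k ≤ 2 * m) :
    Set.ncard {x : Fin 2 → ℤ |
        polyWeight ({(fun _ => -1), (fun i => if i = 0 then (m : ℝ) else 0),
          (fun i => if i = 1 then (m : ℝ) else 0)} : Set (Fin 2 → ℝ)) x = (k : ℝ) / m} =
      if k < m then k + 1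
      else if k = m then m + 2
      else if k < 2 * m then k + 3
      else 2 * m + 4 := by
  have hm1 : (1:ℤ) ≤ (m:ℤ) := by exact_mod_cast hm
  have hk0 : (0:ℤ) ≤ (k:ℤ) := Int.natCast_nonneg k
  have hk2 : (k:ℤ) ≤ 2*(m:ℤ) := by exact_mod_cast hk
  have hm' : (0:ℝ) < m := by exact_mod_cast hm
  have hSeq : {x : Fin 2 → ℤ |
      polyWeight ({(fun _ => -1), (fun i => if i = 0 then (m : ℝ) else 0),
        (fun i => if i = 1 then (m : ℝ) else 0)} : Set (Fin 2 → ℝ)) x = (k : ℝ) / m}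
      = {x : Fin 2 → ℤ | Mw m (x 0) (x 1) = (k:ℤ)} := by
    ext x
    simp only [Set.mem_setOf_eq]
    rw [weight_eq m hm x, div_eq_div_iff (ne_of_gt hm') (ne_of_gt hm'),
      mul_left_inj' (ne_of_gt hm')]
    constructor
    · intro h
      exact_mod_cast h
    · intro h
      exact_mod_cast h
  rw [hSeq]
  split_ifs with h1 h2 h3
  · -- k < m
    have hkm : (k:ℤ) < m := by exact_mod_cast h1
    have : {x : Fin 2 → ℤ | Mw m (x 0) (x 1) = (k:ℤ)} = ↑(Lf k) := by
      ext x
      rw [Set.mem_setOf_eq, char_lemma _ _ _ _ hm1 hk0 hk2, Finset.mem_coe, mem_Lf]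
      omega
    rw [this, Set.ncard_coe_finset, card_Lf _ hk0]
    omega
  · -- k = m
    have hkm : (k:ℤ) = m := by exact_mod_cast h2
    have hnm : pt (-1) (-1) ∉ Lf k := by
      rw [mem_Lf, pt_apply_0]
      omega
    have : {x : Fin 2 → ℤ | Mw m (x 0) (x 1) = (k:ℤ)} = ↑(insert (pt (-1) (-1)) (Lf k)) := by
      ext x
      rw [Set.mem_setOf_eq, char_lemma _ _ _ _ hm1 hk0 hk2, Finset.coe_insert,
        Set.mem_insert_iff, Finset.mem_coe, mem_Lf, eq_pt_iff]
      omega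
    rw [this, Set.ncard_coe_finset, Finset.card_insert_of_notMem hnm, card_Lf _ hk0]
    omega
  · -- m < k < 2m
    have hkm : (m:ℤ) < k := by
      have : m < k := by omega
      exact_mod_cast this
    have hk2' : (k:ℤ) < 2*m := by exact_mod_cast h3
    have hn1 : pt (-1) ((k:ℤ)-m-1) ∉ Lf k := by
      rw [mem_Lf, pt_apply_0]
      omega
    have hn2 : pt ((k:ℤ)-m-1) (-1) ∉ insert (pt (-1) ((k:ℤ)-m-1)) (Lf k) := by
      rw [Finset.mem_insert, mem_Lf, eq_pt_iff, pt_apply_0, pt_apply_1]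
      omega
    have : {x : Fin 2 → ℤ | Mw m (x 0) (x 1) = (k:ℤ)}
        = ↑(insert (pt ((k:ℤ)-m-1) (-1)) (insert (pt (-1) ((k:ℤ)-m-1)) (Lf k))) := by
      ext x
      rw [Set.mem_setOf_eq, char_lemma _ _ _ _ hm1 hk0 hk2]
      simp only [Finset.coe_insert, Set.mem_insert_iff, Finset.mem_coe, mem_Lf, eq_pt_iff]
      omega
    rw [this, Set.ncard_coe_finset, Finset.card_insert_of_notMem hn2,
      Finset.card_insert_of_notMem hn1, card_Lf _ hk0]
    omega
  · -- k = 2m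
    have hkm : (k:ℤ) = 2*m := by omega
    have hn1 : pt (-2) (-2) ∉ Lf k := by
      rw [mem_Lf, pt_apply_0]
      omega
    have hn2 : pt (-1) ((m:ℤ)-1) ∉ insert (pt (-2) (-2)) (Lf k) := by
      rw [Finset.mem_insert, mem_Lf, eq_pt_iff, pt_apply_0, pt_apply_1]
      omega
    have hn3 : pt ((m:ℤ)-1) (-1) ∉ insert (pt (-1) ((m:ℤ)-1)) (insert (pt (-2) (-2)) (Lf k)) := by
      rw [Finset.mem_insert, Finset.mem_insert, mem_Lf, eq_pt_iff, eq_pt_iff,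
        pt_apply_0, pt_apply_1]
      omega
    have : {x : Fin 2 → ℤ | Mw m (x 0) (x 1) = (k:ℤ)}
        = ↑(insert (pt ((m:ℤ)-1) (-1)) (insert (pt (-1) ((m:ℤ)-1))
            (insert (pt (-2) (-2)) (Lf k)))) := by
      ext x
      rw [Set.mem_setOf_eq, char_lemma _ _ _ _ hm1 hk0 hk2]
      simp only [Finset.coe_insert, Set.mem_insert_iff, Finset.mem_coe, mem_Lf, eq_pt_iff]
      omega
    rw [this, Set.ncard_coe_finset, Finset.card_insert_of_notMem hn3,
      Finset.card_insert_of_notMem hn2, Finset.card_insert_of_notMem hn1, card_Lf _ hk0]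
    omega
end

section
/- Let m_1, m_2 be coprime positive integers and let W^0(k) be the number of nonnegative integer solutions of m_2 x_1 + m_1 x_2 = k. Define H^1(k) = 2W^0(k) − 1 for 0 ≤ k < m_1m_2, H^1(m_1m_2) = 1, H^1(m_1m_2 + t) = 3 − 2W^0(t) for 0 < t < m_1m_2, and H^1(2m_1m_2) = 0. Then Σ_{k=0}^{2m_1m_2} H^1(k) = 2m_1m_2. -/
/-- The number of nonnegative integer solutions of `m₂·x₁ + m₁·x₂ = k`. -/
noncomputable def W0 (m₁ m₂ k : ℕ) : ℕ :=
  Set.ncard {p : ℤ × ℤ | 0 ≤ p.1 ∧ 0 ≤ p.2 ∧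
    (m₂ : ℤ) * p.1 + (m₁ : ℤ) * p.2 = (k : ℤ)}

lemma W0_zero (m₁ m₂ : ℕ) (h₁ : 0 < m₁) (h₂ : 0 < m₂) : W0 m₁ m₂ 0 = 1 := by
  unfold W0
  convert Set.ncard_singleton ((0, 0) : ℤ × ℤ) using 2
  ext ⟨a, b⟩
  simp only [Set.mem_setOf_eq, Set.mem_singleton_iff, Prod.mk.injEq]
  constructor
  · rintro ⟨ha, hb, h⟩
    have hm₁ : (0:ℤ) < m₁ := by exact_mod_cast h₁
    have hm₂ : (0:ℤ) < m₂ := by exact_mod_cast h₂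
    push_cast at h
    constructor <;> nlinarith
  · rintro ⟨rfl, rfl⟩
    norm_num

/-- The Hodge numbers of the reflection variant `G^1_{2,(m₁,m₂)}` sum to
`2·m₁·m₂`. -/
theorem stmt18 (m₁ m₂ : ℕ) (h₁ : 0 < m₁) (h₂ : 0 < m₂) (hco : Nat.Coprime m₁ m₂) :
    ∑ k ∈ Finset.range (2 * m₁ * m₂ + 1),
      (if k < m₁ * m₂ then 2 * (W0 m₁ m₂ k : ℤ) - 1
       else if k = m₁ * m₂ then 1
       else if k < 2 * m₁ * m₂ then 3 - 2 * (W0 m₁ m₂ (k - m₁ * m₂) : ℤ)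
       else 0) =
      2 * (m₁ : ℤ) * m₂ := by
  set N := m₁ * m₂ with hN
  have hNpos : 0 < N := Nat.mul_pos h₁ h₂
  have h2 : 2 * m₁ * m₂ = N + N := by rw [hN]; ring
  rw [show 2 * m₁ * m₂ + 1 = N + N + 1 from by rw [h2]]
  rw [Finset.sum_range_succ, Finset.sum_range_add]
  have hlast : (if N + N < N then 2 * (W0 m₁ m₂ (N + N) : ℤ) - 1
       else if N + N = N then 1
       else if N + N < 2 * m₁ * m₂ then 3 - 2 * (W0 m₁ m₂ (N + N - N) : ℤ)
       else 0) = 0 := by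
    rw [if_neg (by omega), if_neg (by omega), if_neg (by omega)]
  rw [hlast, add_zero, ← Finset.sum_add_distrib]
  have hterm : ∀ k ∈ Finset.range N,
      ((if k < N then 2 * (W0 m₁ m₂ k : ℤ) - 1
        else if k = N then 1
        else if k < 2 * m₁ * m₂ then 3 - 2 * (W0 m₁ m₂ (k - N) : ℤ) else 0) +
       (if N + k < N then 2 * (W0 m₁ m₂ (N + k) : ℤ) - 1
        else if N + k = N then 1
        else if N + k < 2 * m₁ * m₂ then 3 - 2 * (W0 m₁ m₂ (N + k - N) : ℤ) else 0)) = 2 := by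
    intro k hk
    rw [Finset.mem_range] at hk
    rw [if_pos hk, if_neg (by omega)]
    rcases Nat.eq_zero_or_pos k with rfl | hk0
    · rw [if_pos (by omega), W0_zero m₁ m₂ h₁ h₂]; ring
    · rw [if_neg (by omega), if_pos (by omega), Nat.add_sub_cancel_left]; ring
  rw [Finset.sum_congr rfl hterm, Finset.sum_const, Finset.card_range]
  rw [hN]; push_cast [nsmul_eq_mul]; ring
end
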